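/- Let φ : A → B be a surjective algebra homomorphism between Banach algebras, and let (b_n)_{n=1}^∞ be any sequence in B. Then there exists N ∈ ℕ such that for all n ≥ N, the closure of b_1 b_2 ⋯ b_n · S(φ) equals the closure of b_1 b_2 ⋯ b_{n+1} · S(φ), and the closure of S(φ) · b_n b_{n-1} ⋯ b_1 equals the closure of S(φ) · b_{n+1} b_n ⋯ b_1. -/

import Mathlib

open Filter Topology

/-- The separating space of a linear map `φ : A → B`:
all `b ∈ B` such that there is a sequence `(aₙ)` in `A` with `aₙ → 0` and `φ(aₙ) → b`. -/
def separatingSpace {A B : Type*} [NormedAddCommGroup A] [NormedSpace ℂ A]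
    [NormedAddCommGroup B] [NormedSpace ℂ B] (φ : A →ₗ[ℂ] B) : Set B :=
  {b : B | ∃ a : ℕ → A, Tendsto a atTop (nhds 0) ∧ Tendsto (fun n => φ (a n)) atTop (nhds b)}

/-- `leftProd b n = b 0 * b 1 * ⋯ * b n` (the sequence is indexed starting from `0`). -/
def leftProd {B : Type*} [NonUnitalNormedRing B] (b : ℕ → B) : ℕ → B
  | 0 => b 0
  | n + 1 => leftProd b n * b (n + 1)

/-- `rightProd b n = b n * b (n-1) * ⋯ * b 0` (the sequence is indexed starting from `0`). -/
def rightProd {B : Type*} [NonUnitalNormedRing B] (b : ℕ → B) : ℕ → B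
  | 0 => b 0
  | n + 1 => b (n + 1) * rightProd b n

open Metric

section Aux

variable {A B : Type*} [NormedAddCommGroup A] [NormedSpace ℂ A]
    [NormedAddCommGroup B] [NormedSpace ℂ B]

def sepSub (φ : A →ₗ[ℂ] B) : Submodule ℂ B where
  carrier := separatingSpace φ
  zero_mem' := ⟨fun _ => 0, tendsto_const_nhds, by simpa using tendsto_const_nhds⟩
  add_mem' := by
    rintro x y ⟨u, hu, hu'⟩ ⟨v, hv, hv'⟩
    exact ⟨u + v, by rw [show u + v = fun n => u n + v n from rfl]; simpa using hu.add hv, by simpa using hu'.add hv'⟩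
  smul_mem' := by
    rintro c x ⟨u, hu, hu'⟩
    refine ⟨c • u, by rw [show c • u = fun n => c • u n from rfl]; simpa using hu.const_smul c, ?_⟩
    simpa [map_smul] using hu'.const_smul c

lemma sep_approx (φ : A →ₗ[ℂ] B) {y : B} (hy : y ∈ closure (separatingSpace φ)) {ε : ℝ}
    (hε : 0 < ε) : ∃ u : A, ‖u‖ ≤ ε ∧ ‖φ u - y‖ ≤ ε := by
  obtain ⟨s, hs, hsy⟩ := Metric.mem_closure_iff.1 hy (ε/2) (by linarith)
  obtain ⟨a, ha, ha'⟩ := hs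
  have h1 : ∀ᶠ m in atTop, ‖a m‖ ≤ ε :=
    (ha.norm.eventually (ge_mem_nhds (by simpa using hε))).mono (by simp)
  have h2 : ∀ᶠ m in atTop, ‖φ (a m) - s‖ ≤ ε/2 := by
    have := (tendsto_iff_norm_sub_tendsto_zero.1 ha').eventually
      (ge_mem_nhds (show (0:ℝ) < ε/2 by linarith))
    exact this.mono (by simp)
  obtain ⟨m, hm1, hm2⟩ := (h1.and h2).exists
  refine ⟨a m, hm1, ?_⟩
  calc ‖φ (a m) - y‖ ≤ ‖φ (a m) - s‖ + ‖s - y‖ := norm_sub_le_norm_sub_add_norm_sub _ _ _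
  _ ≤ ε/2 + ε/2 := by
      refine add_le_add hm2 ?_
      rw [← dist_eq_norm, dist_comm]
      exact hsy.le
  _ = ε := by ring

theorem sep_bound [CompleteSpace A] [CompleteSpace B] (φ : A →ₗ[ℂ] B) :
    ∃ K : ℝ, 0 ≤ K ∧ ∀ x : A, infDist (φ x) (closure (separatingSpace φ)) ≤ K * ‖x‖ := by
  set S : Submodule ℂ B := (sepSub φ).topologicalClosure with hS
  have hSc : IsClosed (S : Set B) := (sepSub φ).isClosed_topologicalClosure
  have hSeq : (S : Set B) = closure (separatingSpace φ) := rfl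
  set g : A →ₗ[ℂ] (B ⧸ S) := S.mkQ.comp φ with hg
  have hcont : Continuous g := by
    apply LinearMap.continuous_of_seq_closed_graph
    intro u x y hu hgu
    have hv : Tendsto (fun n => u n - x) atTop (nhds 0) := by
      simpa using hu.sub_const x
    have hgv : Tendsto (fun n => g (u n - x)) atTop (nhds (y - g x)) := by
      simpa [g, map_sub] using hgu.sub_const (g x)
    obtain ⟨d, hd⟩ := S.mkQ_surjective (y - g x)
    have hd' : (Submodule.Quotient.mk d : B ⧸ S) = y - g x := hd
    have key : ∀ n : ℕ, ∃ m : B, (φ (u n - x) - d) - m ∈ S ∧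
        ‖m‖ < ‖g (u n - x) - (y - g x)‖ + 1/(n+1) := by
      intro n
      obtain ⟨m, hm, hm'⟩ := Submodule.Quotient.norm_mk_lt
        (Submodule.Quotient.mk (φ (u n - x) - d) : B ⧸ S)
        (show (0:ℝ) < 1/(n+1) by positivity)
      refine ⟨m, ?_, ?_⟩
      · rw [← Submodule.Quotient.mk_eq_zero]
        rw [show ((Submodule.Quotient.mk (φ (u n - x) - d - m)) : B ⧸ S)
          = Submodule.Quotient.mk (φ (u n - x) - d) - Submodule.Quotient.mk m from by
            simp [map_sub]]
        rw [← hm]; simp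
      · refine hm'.trans_le ?_
        have : (Submodule.Quotient.mk (φ (u n - x) - d) : B ⧸ S) = g (u n - x) - (y - g x) := by
          rw [show ((Submodule.Quotient.mk (φ (u n - x) - d)) : B ⧸ S)
            = Submodule.Quotient.mk (φ (u n - x)) - Submodule.Quotient.mk d from by
              simp [map_sub]]
          rw [hd']; rfl
        rw [this]
    choose m hmS hmlt using key
    have hm0 : Tendsto m atTop (nhds 0) := by
      have h1 : Tendsto (fun n => ‖g (u n - x) - (y - g x)‖ + 1/(n+1:ℝ)) atTop (nhds 0) := by
        have := tendsto_iff_norm_sub_tendsto_zero.1 hgv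
        have h2 : Tendsto (fun n : ℕ => 1/(n+1:ℝ)) atTop (nhds 0) := tendsto_one_div_add_atTop_nhds_zero_nat
        simpa using this.add h2
      have : Tendsto (fun n => ‖m n‖) atTop (nhds 0) :=
        squeeze_zero (fun n => norm_nonneg _) (fun n => (hmlt n).le) h1
      exact tendsto_zero_iff_norm_tendsto_zero.2 this
    -- now approximate elements of S by φ of small elements
    have key2 : ∀ n : ℕ, ∃ t : A, ‖t‖ ≤ 1/(n+1) ∧ ‖φ t - (φ (u n - x) - d - m n)‖ ≤ 1/(n+1) := by
      intro n
      exact sep_approx φ (hSeq ▸ (hmS n)) (show (0:ℝ) < 1/(n+1) by positivity)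
    choose t ht htφ using key2
    have ht0 : Tendsto t atTop (nhds 0) := by
      apply tendsto_zero_iff_norm_tendsto_zero.2
      exact squeeze_zero (fun n => norm_nonneg _) ht tendsto_one_div_add_atTop_nhds_zero_nat
    have hφv : Tendsto (fun n => φ (u n - x - t n)) atTop (nhds d) := by
      have : ∀ n, φ (u n - x - t n) = d + m n - (φ (t n) - (φ (u n - x) - d - m n)) := by
        intro n; simp [map_sub]; abel
      rw [show d = d + 0 - 0 by abel] at *
      simp only [this]
      refine Tendsto.sub ?_ ?_
      · simpa using (tendsto_const_nhds (x := d)).add hm0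
      · apply tendsto_zero_iff_norm_tendsto_zero.2
        exact squeeze_zero (fun n => norm_nonneg _) htφ tendsto_one_div_add_atTop_nhds_zero_nat
    have hdS : d ∈ separatingSpace φ :=
      ⟨fun n => u n - x - t n, by simpa using hv.sub ht0, hφv⟩
    have : (Submodule.Quotient.mk d : B ⧸ S) = 0 := by
      rw [Submodule.Quotient.mk_eq_zero]
      exact Submodule.le_topologicalClosure _ hdS
    rw [hd'] at this
    rwa [sub_eq_zero] at this
  set G : A →L[ℂ] B ⧸ S := ⟨g, hcont⟩ with hG
  refine ⟨‖G‖, ContinuousLinearMap.opNorm_nonneg G, fun x => ?_⟩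
  have h1 : ∀ z : B, infDist z (closure (separatingSpace φ)) ≤ ‖(Submodule.Quotient.mk z : B ⧸ S)‖ := by
    intro z
    refine le_of_forall_pos_le_add fun ε hε => ?_
    obtain ⟨m, hm, hm'⟩ := Submodule.Quotient.norm_mk_lt (Submodule.Quotient.mk z : B ⧸ S) hε
    have hzm : z - m ∈ closure (separatingSpace φ) := by
      rw [← hSeq, SetLike.mem_coe]
      rw [← Submodule.Quotient.mk_eq_zero]
      rw [show ((Submodule.Quotient.mk (z - m)) : B ⧸ S)
        = Submodule.Quotient.mk z - Submodule.Quotient.mk m from by simp [map_sub]]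
      rw [hm]; simp
    calc infDist z (closure (separatingSpace φ)) ≤ dist z (z - m) := infDist_le_dist_of_mem hzm
    _ = ‖m‖ := by rw [dist_eq_norm]; simp
    _ ≤ _ := hm'.le
  calc infDist (φ x) (closure (separatingSpace φ)) ≤ ‖(Submodule.Quotient.mk (φ x) : B ⧸ S)‖ := h1 _
  _ = ‖G x‖ := rfl
  _ ≤ ‖G‖ * ‖x‖ := G.le_opNorm x

theorem sep_comp_subset [CompleteSpace A] [CompleteSpace B] (φ : A →ₗ[ℂ] B) (R : B →L[ℂ] B) :
    separatingSpace ((R : B →ₗ[ℂ] B).comp φ) ⊆ closure (R '' separatingSpace φ) := by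
  obtain ⟨K, hK0, hK⟩ := sep_bound φ
  rintro y ⟨u, hu, hu'⟩
  rw [mem_closure_iff_seq_limit]
  -- pick s_n in separatingSpace close to φ (u n)
  have key : ∀ n : ℕ, ∃ s ∈ separatingSpace φ, ‖φ (u n) - s‖ ≤ K * ‖u n‖ + 1/(n+1) := by
    intro n
    have h := hK (u n)
    have hne : (closure (separatingSpace φ)).Nonempty :=
      ⟨0, subset_closure (sepSub φ).zero_mem⟩
    obtain ⟨s', hs', hd⟩ := (infDist_lt_iff hne).1
      (show infDist (φ (u n)) (closure (separatingSpace φ)) < K * ‖u n‖ + 1/(2*(n+1)) by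
        have : (0:ℝ) < 1/(2*(n+1)) := by positivity
        linarith)
    obtain ⟨s, hs, hss'⟩ := Metric.mem_closure_iff.1 hs' (1/(2*(n+1))) (by positivity)
    refine ⟨s, hs, ?_⟩
    have h1 : ‖φ (u n) - s‖ ≤ dist (φ (u n)) s' + dist s' s := by
      rw [← dist_eq_norm]; exact dist_triangle _ _ _
    have hh : 1/(2*(n+1):ℝ) + 1/(2*(n+1):ℝ) = 1/(n+1:ℝ) := by
      have hpos : ((n:ℝ)+1) ≠ 0 := by positivity
      field_simp
      norm_num
    linarith
  choose s hsmem hsclose using key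
  refine ⟨fun n => R (s n), fun n => ⟨s n, hsmem n, rfl⟩, ?_⟩
  -- R (s n) → y since R (φ (u n)) → y and R (φ u n - s n) → 0
  have hdiff : Tendsto (fun n => φ (u n) - s n) atTop (nhds 0) := by
    apply tendsto_zero_iff_norm_tendsto_zero.2
    have hb : Tendsto (fun n => K * ‖u n‖ + 1/(n+1:ℝ)) atTop (nhds 0) := by
      have h2 : Tendsto (fun n : ℕ => 1/(n+1:ℝ)) atTop (nhds 0) := tendsto_one_div_add_atTop_nhds_zero_nat
      have h3 : Tendsto (fun n => K * ‖u n‖) atTop (nhds 0) := by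
        simpa using (hu.norm.const_mul K)
      simpa using h3.add h2
    exact squeeze_zero (fun n => norm_nonneg _) hsclose hb
  have h4 : Tendsto (fun n => R (φ (u n) - s n)) atTop (nhds 0) := by
    have h4' := (R.continuous.tendsto 0).comp hdiff
    rw [map_zero] at h4'
    exact h4'
  have h5 : Tendsto (fun n => R (φ (u n))) atTop (nhds y) := hu'
  have : ∀ n, R (s n) = R (φ (u n)) - R (φ (u n) - s n) := by intro n; simp [map_sub]
  simp only [this]
  simpa using h5.sub h4

end Aux

set_option maxHeartbeats 2000000 in
theorem stab_left
    {A B : Type*} [NonUnitalNormedRing A] [NormedSpace ℂ A] [IsScalarTower ℂ A A]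
    [SMulCommClass ℂ A A] [CompleteSpace A]
    [NonUnitalNormedRing B] [NormedSpace ℂ B] [IsScalarTower ℂ B B]
    [SMulCommClass ℂ B B] [CompleteSpace B]
    (φ : A →ₗ[ℂ] B) (hmul : ∀ x y : A, φ (x * y) = φ x * φ y)
    (hsurj : Function.Surjective φ) (b : ℕ → B) :
    ∃ N : ℕ, ∀ n ≥ N,
      closure ((fun s => leftProd b n * s) '' separatingSpace φ) =
        closure ((fun s => leftProd b (n + 1) * s) '' separatingSpace φ) := by
  by_contra hcon
  push_neg at hcon
  set Sp := separatingSpace φ with hSp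
  set c := leftProd b with hc
  set F : ℕ → Set B := fun n => closure ((fun s => c n * s) '' Sp) with hF
  -- basic facts about F
  have hFclosed : ∀ n, IsClosed (F n) := fun n => isClosed_closure
  have hzeroSp : (0 : B) ∈ Sp := (sepSub φ).zero_mem
  have hzeroF : ∀ n, (0 : B) ∈ F n := fun n =>
    subset_closure ⟨0, hzeroSp, by simp⟩
  have hFne : ∀ n, (F n).Nonempty := fun n => ⟨0, hzeroF n⟩
  -- F n as (closure of) a submodule
  have habsorb : ∀ (β : B), ∀ s ∈ Sp, β * s ∈ Sp := by
    intro β s hs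
    obtain ⟨α, hα⟩ := hsurj β
    obtain ⟨u, hu, hu'⟩ := hs
    refine ⟨fun m => α * u m, ?_, ?_⟩
    · have h2 := hu.const_mul α
      simpa using h2
    · have : ∀ m, φ (α * u m) = β * φ (u m) := fun m => by rw [hmul, hα]
      simp only [this]
      exact (hu'.const_mul β)
  have hFsm : ∀ n (r : ℂ) (f : B), f ∈ F n → r • f ∈ F n := by
    intro n r f hf
    have : F n = ((Submodule.map (LinearMap.mulLeft ℂ (c n)) (sepSub φ)).topologicalClosure : Set B) := by
      simp only [Submodule.topologicalClosure_coe, Submodule.map_coe]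
      rfl
    rw [this] at hf ⊢
    exact Submodule.smul_mem _ r hf
  have hFneg : ∀ n (f : B), f ∈ F n → -f ∈ F n := by
    intro n f hf
    have := hFsm n (-1) f hf
    simpa using this
  have hFmono : ∀ n, F (n + 1) ⊆ F n := by
    intro n
    apply closure_minimal ?_ (hFclosed n)
    rintro y ⟨s, hs, rfl⟩
    show c (n + 1) * s ∈ F n
    have hcc : c (n + 1) * s = c n * (b (n + 1) * s) := by
      rw [show c (n+1) = c n * b (n+1) from rfl, mul_assoc]
    rw [hcc]
    exact subset_closure ⟨b (n + 1) * s, habsorb _ _ hs, rfl⟩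
  -- the K constants
  have hKex : ∀ m : ℕ, ∃ K : ℝ, 0 ≤ K ∧ ∀ x : A, infDist (c m * φ x) (F m) ≤ K * ‖x‖ := by
    intro m
    set R : B →L[ℂ] B := ContinuousLinearMap.mul ℂ B (c m) with hR
    obtain ⟨K, hK0, hK⟩ := sep_bound ((R : B →ₗ[ℂ] B).comp φ)
    refine ⟨K, hK0, fun x => ?_⟩
    have hsub : closure (separatingSpace ((R : B →ₗ[ℂ] B).comp φ)) ⊆ F m := by
      apply closure_minimal ?_ (hFclosed m)
      refine (sep_comp_subset φ R).trans ?_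
      apply closure_mono
      rintro y ⟨s, hs, rfl⟩
      exact ⟨s, hs, rfl⟩
    have hne : (closure (separatingSpace ((R : B →ₗ[ℂ] B).comp φ))).Nonempty :=
      ⟨0, subset_closure (sepSub _).zero_mem⟩
    refine le_trans (infDist_le_infDist_of_subset hsub hne) ?_
    exact hK x
  choose K hK0 hK using hKex
  -- lifts of b
  choose a ha using fun i => hsurj (b i)
  -- segment products
  set seg : ℕ → ℕ → A := fun p q => leftProd (fun i => a (p + i)) (q - p) with hseg
  have hsegsucc : ∀ p q, p ≤ q → seg p (q + 1) = seg p q * a (q + 1) := by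
    intro p q hpq
    have h1 : q + 1 - p = (q - p) + 1 := by omega
    have h2 : p + (q - p + 1) = q + 1 := by omega
    simp only [hseg, h1]
    rw [show leftProd (fun i => a (p + i)) (q - p + 1)
      = leftProd (fun i => a (p + i)) (q - p) * a (p + (q - p + 1)) from rfl, h2]
  have hsegcat : ∀ p q r, p ≤ q → q < r → seg p r = seg p q * seg (q + 1) r := by
    intro p q r hpq hqr
    induction r with
    | zero => omega
    | succ r ih =>
      rcases Nat.lt_or_ge q r with h | h
      · have h1 : p ≤ r := by omega
        have h2 : q + 1 ≤ r := by omega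
        rw [hsegsucc p r h1, ih h, hsegsucc (q+1) r h2, mul_assoc]
      · have hqr' : q = r := by omega
        subst hqr'
        rw [hsegsucc p q hpq]
        congr 1
        simp only [hseg]
        have : q + 1 - (q + 1) = 0 := by omega
        rw [this]
        show a (q + 1 + 0) = a (q + 1)
        norm_num
  have hphiseg : ∀ q (x : A), φ (seg 0 q * x) = c q * φ x := by
    intro q
    induction q with
    | zero =>
      intro x
      show φ (a 0 * x) = leftProd b 0 * φ x
      rw [hmul, ha 0]
      rfl
    | succ q ih =>
      intro x
      rw [hsegsucc 0 q (Nat.zero_le q), mul_assoc, ih (a (q+1) * x), hmul, ha,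
        show c (q+1) = c q * b (q+1) from rfl, mul_assoc]
  -- the sequence of drop positions, with gaps ≥ 2
  choose D hD1 hD2 using hcon
  set n : ℕ → ℕ := fun k => Nat.rec (D 0) (fun _ prev => D (prev + 2)) k with hn
  have hnsucc : ∀ k, n (k + 1) = D (n k + 2) := fun k => rfl
  have hgap : ∀ k, n k + 2 ≤ n (k + 1) := by
    intro k
    rw [hnsucc]
    exact hD1 _
  have hmono : ∀ j k, j < k → n j + 2 ≤ n k := by
    intro j k hjk
    induction k with
    | zero => omega
    | succ k ih =>
      rcases Nat.lt_or_ge j k with h | h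
      · exact le_trans (ih h) (by have := hgap k; omega)
      · have : j = k := by omega
        subst this
        exact hgap j
  have hdrop : ∀ k, F (n k) ≠ F (n k + 1) := by
    intro k
    cases k with
    | zero => exact hD2 0
    | succ k => rw [hnsucc]; exact hD2 _
  -- drop witnesses of arbitrarily large distance
  have hbig : ∀ k (T : ℝ), ∃ ξ ∈ Sp, T ≤ infDist (c (n k) * ξ) (F (n k + 1)) := by
    intro k T
    -- first, some witness
    have hw : ∃ ξ ∈ Sp, c (n k) * ξ ∉ F (n k + 1) := by
      by_contra hw
      push_neg at hw
      apply hdrop k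
      apply le_antisymm ?_ (hFmono (n k))
      apply closure_minimal ?_ (hFclosed (n k + 1))
      rintro y ⟨s, hs, rfl⟩
      exact hw s hs
    obtain ⟨ξ₀, hξ₀, hξ₀n⟩ := hw
    have hδ : 0 < infDist (c (n k) * ξ₀) (F (n k + 1)) := by
      rcases lt_or_eq_of_le (infDist_nonneg (x := c (n k) * ξ₀) (s := F (n k + 1))) with h | h
      · exact h
      · exfalso
        apply hξ₀n
        have : c (n k) * ξ₀ ∈ closure (F (n k + 1)) :=
          (mem_closure_iff_infDist_zero (hFne _)).2 h.symm
        rwa [(hFclosed _).closure_eq] at this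
    set δ := infDist (c (n k) * ξ₀) (F (n k + 1)) with hδdef
    set r : ℝ := max T 0 / δ + 1 with hr
    have hr0 : 0 < r := by positivity
    refine ⟨(r : ℂ) • ξ₀, Submodule.smul_mem (sepSub φ) _ hξ₀, ?_⟩
    by_contra hlt
    push_neg at hlt
    obtain ⟨f, hf, hfd⟩ := (infDist_lt_iff (hFne _)).1 hlt
    -- dist (c nk * (r • ξ₀)) f = r * dist (c nk * ξ₀) (r⁻¹ • f) ≥ r δ
    have hrne : (r : ℂ) ≠ 0 := by
      simp only [ne_eq, Complex.ofReal_eq_zero]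
      positivity
    have key : dist (c (n k) * ((r:ℂ) • ξ₀)) f = r * dist (c (n k) * ξ₀) ((r:ℂ)⁻¹ • f) := by
      rw [dist_eq_norm, dist_eq_norm]
      rw [mul_smul_comm]
      have : (r:ℂ) • (c (n k) * ξ₀) - f = (r:ℂ) • (c (n k) * ξ₀ - (r:ℂ)⁻¹ • f) := by
        rw [smul_sub, smul_inv_smul₀ hrne]
      rw [this, norm_smul]
      congr 1
      simp [abs_of_pos hr0]
    have hmem : (r:ℂ)⁻¹ • f ∈ F (n k + 1) := hFsm _ _ _ hf
    have h1 : δ ≤ dist (c (n k) * ξ₀) ((r:ℂ)⁻¹ • f) := infDist_le_dist_of_mem hmem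
    have h2 : r * δ ≤ dist (c (n k) * ((r:ℂ) • ξ₀)) f := by
      rw [key]
      exact mul_le_mul_of_nonneg_left h1 hr0.le
    have h3 : T ≤ r * δ := by
      rw [hr, add_mul, div_mul_cancel₀ _ (ne_of_gt hδ)]
      have : T ≤ max T 0 := le_max_left _ _
      nlinarith [hδ]
    linarith
  -- recursive construction
  set Spec : ℕ → (ℕ → A) → (B × A) → Prop := fun k prev ξx =>
    ξx.1 ∈ Sp ∧
    2 * ‖∑ j ∈ Finset.range k, c (n j) * φ (prev j)‖ + k + 3 ≤
      infDist (c (n k) * ξx.1) (F (n k + 1)) ∧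
    (∀ i ≤ k, ∀ p ≤ n k, (1 + K (n i + 1)) * ‖seg p (n k) * ξx.2‖ ≤ (1/2)^k) ∧
    ‖c (n k) * φ ξx.2 - c (n k) * ξx.1‖ ≤ (1/2)^k with hSpec
  have Hex : ∀ (k : ℕ) (prev : ℕ → A), ∃ ξx : B × A, Spec k prev ξx := by
    intro k prev
    obtain ⟨ξ, hξSp, hξd⟩ := hbig k (2 * ‖∑ j ∈ Finset.range k, c (n j) * φ (prev j)‖ + k + 3)
    obtain ⟨u, hu0, huφ⟩ := hξSp
    have hev1 : ∀ i ≤ k, ∀ p ≤ n k, ∀ᶠ m in atTop,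
        (1 + K (n i + 1)) * ‖seg p (n k) * u m‖ ≤ (1/2)^k := by
      intro i hi p hp
      have h1 : Tendsto (fun m => seg p (n k) * u m) atTop (nhds 0) := by
        have h2 := hu0.const_mul (seg p (n k))
        simpa using h2
      have h2 : Tendsto (fun m => (1 + K (n i + 1)) * ‖seg p (n k) * u m‖) atTop (nhds 0) := by
        simpa using h1.norm.const_mul (1 + K (n i + 1))
      exact h2.eventually (ge_mem_nhds (show (0:ℝ) < (1/2)^k by positivity))
    have hev2 : ∀ᶠ m in atTop, ‖c (n k) * φ (u m) - c (n k) * ξ‖ ≤ (1/2)^k := by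
      have h1 : Tendsto (fun m => c (n k) * φ (u m) - c (n k) * ξ) atTop (nhds 0) := by
        have h2 := (huφ.const_mul (c (n k))).sub_const (c (n k) * ξ)
        simpa using h2
      exact h1.norm.eventually (ge_mem_nhds (by simpa using (show (0:ℝ) < (1/2)^k by positivity)))
    have hall : ∀ᶠ m in atTop, (∀ i ∈ Finset.range (k+1), ∀ p ∈ Finset.range (n k + 1),
        (1 + K (n i + 1)) * ‖seg p (n k) * u m‖ ≤ (1/2)^k) ∧
        ‖c (n k) * φ (u m) - c (n k) * ξ‖ ≤ (1/2)^k := by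
      refine Filter.Eventually.and ?_ hev2
      rw [Filter.eventually_all_finset]
      intro i hi
      rw [Filter.eventually_all_finset]
      intro p hp
      exact hev1 i (by simpa using Nat.lt_succ_iff.1 (Finset.mem_range.1 hi))
        p (by simpa using Nat.lt_succ_iff.1 (Finset.mem_range.1 hp))
    obtain ⟨m, hm1, hm2⟩ := hall.exists
    refine ⟨(ξ, u m), ⟨u, hu0, huφ⟩, hξd, ?_, hm2⟩
    intro i hi p hp
    exact hm1 i (Finset.mem_range.2 (Nat.lt_succ_of_le hi)) p (Finset.mem_range.2 (Nat.lt_succ_of_le hp))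
  choose W hW using Hex
  set hist : ℕ → ℕ → A := fun k => Nat.rec (fun _ => 0) (fun m ih => Function.update ih m (W m ih).2) k
    with hhist
  set xx : ℕ → A := fun k => (W k (hist k)).2 with hxx
  set ξξ : ℕ → B := fun k => (W k (hist k)).1 with hξξ
  have hist_lt : ∀ k j, j < k → hist k j = xx j := by
    intro k
    induction k with
    | zero => omega
    | succ k ih =>
      intro j hj
      have hk1 : hist (k+1) = Function.update (hist k) k (W k (hist k)).2 := rfl
      rcases Nat.lt_or_ge j k with h | h
      · rw [hk1, Function.update_of_ne (by omega)]
        exact ih j h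
      · have : j = k := by omega
        subst this
        rw [hk1, Function.update_self]
  set Sig : ℕ → B := fun k => ∑ j ∈ Finset.range k, c (n j) * φ (xx j) with hSig
  have hspec : ∀ k, Spec k xx ((ξξ k, xx k)) := by
    intro k
    have h0 := hW k (hist k)
    have heq : ∑ j ∈ Finset.range k, c (n j) * φ (hist k j)
        = ∑ j ∈ Finset.range k, c (n j) * φ (xx j) := by
      apply Finset.sum_congr rfl
      intro j hj
      rw [hist_lt k j (Finset.mem_range.1 hj)]
    rcases h0 with ⟨h1, h2, h3, h4⟩
    exact ⟨h1, by rwa [heq] at h2, h3, h4⟩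
  have hξmem : ∀ k, ξξ k ∈ Sp := fun k => (hspec k).1
  have hdist : ∀ k, 2 * ‖Sig k‖ + k + 3 ≤ infDist (c (n k) * ξξ k) (F (n k + 1)) :=
    fun k => (hspec k).2.1
  have hsmall : ∀ k, ∀ i ≤ k, ∀ p ≤ n k, (1 + K (n i + 1)) * ‖seg p (n k) * xx k‖ ≤ (1/2)^k :=
    fun k => (hspec k).2.2.1
  have hclose : ∀ k, ‖c (n k) * φ (xx k) - c (n k) * ξξ k‖ ≤ (1/2)^k := fun k => (hspec k).2.2.2
  -- the glided sum
  set v : ℕ → A := fun k => seg 0 (n k) * xx k with hv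
  have hvnorm : ∀ k, ‖v k‖ ≤ (1/2)^k := by
    intro k
    have h1 := hsmall k k le_rfl 0 (Nat.zero_le _)
    have h2 : ‖v k‖ ≤ (1 + K (n k + 1)) * ‖v k‖ := by
      nlinarith [norm_nonneg (v k), hK0 (n k + 1)]
    exact le_trans h2 h1
  have hvsum : Summable v :=
    Summable.of_norm (Summable.of_nonneg_of_le (fun k => norm_nonneg _) hvnorm summable_geometric_two)
  set x : A := ∑' k, v k with hxdef
  set z : B := φ x with hz
  -- the contradiction index
  have hcontra : ∀ j : ℕ, (j : ℝ) ≤ ‖z‖ := by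
    intro j
    -- tail
    set tail : ℕ → A := fun i => seg (n j + 2) (n (i + (j+1))) * xx (i + (j+1)) with htail
    have htn : ∀ i, (1 + K (n j + 1)) * ‖tail i‖ ≤ (1/2)^(i + (j+1)) := by
      intro i
      exact hsmall (i + (j+1)) j (by omega) (n j + 2) (hmono j (i + (j+1)) (by omega))
    have htn' : ∀ i, ‖tail i‖ ≤ (1/2)^(i + (j+1)) := by
      intro i
      have h2 : ‖tail i‖ ≤ (1 + K (n j + 1)) * ‖tail i‖ := by
        nlinarith [norm_nonneg (tail i), hK0 (n j + 1)]
      exact le_trans h2 (htn i)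
    have htsum : Summable tail := by
      apply Summable.of_norm
      apply Summable.of_nonneg_of_le (fun i => norm_nonneg _) htn'
      have : Summable (fun i : ℕ => ((1:ℝ)/2)^(i + (j+1))) := by
        simpa [pow_add] using summable_geometric_two.mul_right (((1:ℝ)/2)^(j+1))
      exact this
    have hnormsum : Summable (fun i => ‖tail i‖) :=
      Summable.of_nonneg_of_le (fun i => norm_nonneg _) htn'
        (by simpa [pow_add] using summable_geometric_two.mul_right (((1:ℝ)/2)^(j+1)))
    set w : A := ∑' i, tail i with hw
    -- bound on (1+K) * ‖w‖
    have hwb : (1 + K (n j + 1)) * ‖w‖ ≤ (1/2)^j := by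
      have h1 : ‖w‖ ≤ ∑' i, ‖tail i‖ := norm_tsum_le_tsum_norm hnormsum
      have h2 : (1 + K (n j + 1)) * ‖w‖ ≤ (1 + K (n j + 1)) * ∑' i, ‖tail i‖ := by
        have := hK0 (n j + 1)
        nlinarith
      have h3 : (1 + K (n j + 1)) * ∑' i, ‖tail i‖ = ∑' i, (1 + K (n j + 1)) * ‖tail i‖ :=
        (tsum_mul_left).symm
      have h4 : ∑' i, (1 + K (n j + 1)) * ‖tail i‖ ≤ ∑' i, ((1:ℝ)/2)^(i + (j+1)) := by
        apply Summable.tsum_le_tsum htn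
        · exact hnormsum.mul_left _
        · simpa [pow_add] using summable_geometric_two.mul_right (((1:ℝ)/2)^(j+1))
      have h5 : ∑' i, ((1:ℝ)/2)^(i + (j+1)) = (1/2)^j := by
        have : ∑' i : ℕ, ((1:ℝ)/2)^(i + (j+1)) = (∑' i : ℕ, ((1:ℝ)/2)^i) * ((1:ℝ)/2)^(j+1) := by
          simp only [pow_add]
          exact tsum_mul_right
        rw [this, tsum_geometric_two]
        rw [show ((1:ℝ)/2)^(j+1) = ((1:ℝ)/2)^j * (1/2) from pow_succ _ _]
        ring
      linarith
    -- decomposition of z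
    have hdecomp : z = (∑ k ∈ Finset.range (j+1), c (n k) * φ (xx k)) + c (n j + 1) * φ w := by
      have h1 : x = (∑ k ∈ Finset.range (j+1), v k) + ∑' i, v (i + (j+1)) :=
        (Summable.sum_add_tsum_nat_add (j+1) hvsum).symm
      have h2 : ∀ i : ℕ, v (i + (j+1)) = seg 0 (n j + 1) * tail i := by
        intro i
        show seg 0 (n (i + (j+1))) * xx (i + (j+1))
          = seg 0 (n j + 1) * (seg (n j + 2) (n (i + (j+1))) * xx (i + (j+1)))
        have hcc2 : seg 0 (n (i + (j+1))) = seg 0 (n j + 1) * seg (n j + 2) (n (i + (j+1))) := by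
          have := hsegcat 0 (n j + 1) (n (i + (j+1))) (Nat.zero_le _)
            (by have := hmono j (i + (j+1)) (by omega); omega)
          simpa using this
        rw [hcc2, mul_assoc]
      have h3 : ∑' i, v (i + (j+1)) = seg 0 (n j + 1) * w := by
        have hL := (ContinuousLinearMap.mul ℂ A (seg 0 (n j + 1))).map_tsum htsum
        simp only [ContinuousLinearMap.mul_apply'] at hL
        have hc3 := tsum_congr (L := SummationFilter.unconditional ℕ) h2
        rw [hc3]
        exact hL.symm
      rw [hz, h1, h3, map_add, map_sum]
      congr 1
      · apply Finset.sum_congr rfl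
        intro k _
        exact hphiseg (n k) (xx k)
      · exact hphiseg (n j + 1) w
    -- choose f in F (n j + 1) close to c (n j + 1) * φ w
    have hKw : infDist (c (n j + 1) * φ w) (F (n j + 1)) ≤ 1 := by
      refine le_trans (hK (n j + 1) w) ?_
      have h1 : K (n j + 1) * ‖w‖ ≤ (1 + K (n j + 1)) * ‖w‖ := by
        nlinarith [norm_nonneg w]
      have h2 : ((1:ℝ)/2)^j ≤ 1 := by
        apply pow_le_one₀ <;> norm_num
      linarith
    obtain ⟨f, hfF, hfd⟩ := (infDist_lt_iff (hFne (n j + 1))).1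
      (show infDist (c (n j + 1) * φ w) (F (n j + 1)) < 2 by linarith)
    -- assemble
    set P : B := c (n j) * ξξ j + f with hP
    set Q : B := Sig j + (c (n j) * φ (xx j) - c (n j) * ξξ j) + (c (n j + 1) * φ w - f) with hQ
    have hzPQ : z = P + Q := by
      rw [hdecomp, Finset.sum_range_succ]
      rw [hP, hQ, hSig]
      abel
    have hPlow : 2 * ‖Sig j‖ + j + 3 ≤ ‖P‖ := by
      refine le_trans (hdist j) ?_
      have : ‖P‖ = dist (c (n j) * ξξ j) (-f) := by
        rw [dist_eq_norm, hP]
        congr 1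
        abel
      rw [this]
      exact infDist_le_dist_of_mem (hFneg _ _ hfF)
    have hQhigh : ‖Q‖ ≤ ‖Sig j‖ + 1 + 2 := by
      rw [hQ]
      refine le_trans (norm_add_le _ _) ?_
      have h1 : ‖Sig j + (c (n j) * φ (xx j) - c (n j) * ξξ j)‖ ≤ ‖Sig j‖ + 1 := by
        refine le_trans (norm_add_le _ _) ?_
        have h2 := hclose j
        have h3 : ((1:ℝ)/2)^j ≤ 1 := by apply pow_le_one₀ <;> norm_num
        linarith
      have h4 : ‖c (n j + 1) * φ w - f‖ ≤ 2 := by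
        rw [← dist_eq_norm]
        exact hfd.le
      linarith
    have : ‖P‖ ≤ ‖z‖ + ‖Q‖ := by
      rw [show P = z - Q from by rw [hzPQ]; abel]
      exact norm_sub_le _ _
    linarith [norm_nonneg (Sig j)]
  obtain ⟨j, hj⟩ := exists_nat_gt ‖z‖
  have := hcontra j
  linarith

/-- If `φ : A → B` is a surjective algebra homomorphism between Banach algebras and
`(bₙ)` is any sequence in `B`, then there is an `N` so that for all `n ≥ N`,
`closure (b₀b₁⋯bₙ · S(φ)) = closure (b₀b₁⋯bₙ₊₁ · S(φ))` and
`closure (S(φ) · bₙbₙ₋₁⋯b₀) = closure (S(φ) · bₙ₊₁bₙ⋯b₀)`. -/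
theorem sinclair_for_epimorphisms
    {A B : Type*} [NonUnitalNormedRing A] [NormedSpace ℂ A] [IsScalarTower ℂ A A]
    [SMulCommClass ℂ A A] [CompleteSpace A]
    [NonUnitalNormedRing B] [NormedSpace ℂ B] [IsScalarTower ℂ B B]
    [SMulCommClass ℂ B B] [CompleteSpace B]
    (φ : A →ₗ[ℂ] B) (hmul : ∀ x y : A, φ (x * y) = φ x * φ y)
    (hsurj : Function.Surjective φ) (b : ℕ → B) :
    ∃ N : ℕ, ∀ n ≥ N,
      closure ((fun s => leftProd b n * s) '' separatingSpace φ) =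
        closure ((fun s => leftProd b (n + 1) * s) '' separatingSpace φ) ∧
      closure ((fun s => s * rightProd b n) '' separatingSpace φ) =
        closure ((fun s => s * rightProd b (n + 1)) '' separatingSpace φ) := by
  obtain ⟨N1, hN1⟩ := stab_left φ hmul hsurj b
  -- opposite setting
  set φ' : Aᵐᵒᵖ →ₗ[ℂ] Bᵐᵒᵖ :=
    ((MulOpposite.opLinearEquiv ℂ : B ≃ₗ[ℂ] Bᵐᵒᵖ).toLinearMap.comp φ).comp
      (MulOpposite.opLinearEquiv ℂ : A ≃ₗ[ℂ] Aᵐᵒᵖ).symm.toLinearMap with hφ'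
  have hφ'app : ∀ u : Aᵐᵒᵖ, φ' u = MulOpposite.op (φ u.unop) := fun u => rfl
  have hmul' : ∀ x y : Aᵐᵒᵖ, φ' (x * y) = φ' x * φ' y := by
    intro x y
    simp only [hφ'app]
    rw [show (x * y).unop = y.unop * x.unop from rfl, hmul, ← MulOpposite.op_mul]
  have hsurj' : Function.Surjective φ' := by
    intro y
    obtain ⟨x, hx⟩ := hsurj y.unop
    exact ⟨MulOpposite.op x, by simp [hφ'app, hx]⟩
  obtain ⟨N2, hN2⟩ := stab_left φ' hmul' hsurj' (fun i => MulOpposite.op (b i))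
  -- transfer facts
  have hsep : separatingSpace φ' = MulOpposite.op '' separatingSpace φ := by
    ext y
    constructor
    · rintro ⟨u, hu, hu'⟩
      refine ⟨y.unop, ⟨fun m => (u m).unop, ?_, ?_⟩, by simp⟩
      · have := (MulOpposite.continuous_unop.tendsto (0 : Aᵐᵒᵖ)).comp hu
        simpa [Function.comp_def] using this
      · have := (MulOpposite.continuous_unop.tendsto y).comp hu'
        have h2 : ∀ m, (φ' (u m)).unop = φ (u m).unop := fun m => rfl
        simpa [Function.comp_def, h2] using this
    · rintro ⟨s, ⟨u, hu, hu'⟩, rfl⟩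
      refine ⟨fun m => MulOpposite.op (u m), ?_, ?_⟩
      · have := (MulOpposite.continuous_op.tendsto (0 : A)).comp hu
        simpa [Function.comp_def] using this
      · have h3 := (MulOpposite.continuous_op.tendsto s).comp hu'
        have h2 : ∀ m, φ' (MulOpposite.op (u m)) = MulOpposite.op (φ (u m)) := fun m => by
          simp [hφ'app]
        simpa [Function.comp_def, h2] using h3
  have hlp : ∀ m, leftProd (fun i => MulOpposite.op (b i)) m = MulOpposite.op (rightProd b m) := by
    intro m
    induction m with
    | zero => rfl
    | succ m ih =>
      show leftProd _ m * MulOpposite.op (b (m+1)) = MulOpposite.op (b (m+1) * rightProd b m)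
      rw [ih, ← MulOpposite.op_mul]
  have hclos : ∀ m, closure ((fun s => leftProd (fun i => MulOpposite.op (b i)) m * s)
        '' separatingSpace φ')
      = MulOpposite.op '' closure ((fun s => s * rightProd b m) '' separatingSpace φ) := by
    intro m
    rw [hsep, hlp]
    have himg : (fun s => MulOpposite.op (rightProd b m) * s)
          '' (MulOpposite.op '' separatingSpace φ)
        = MulOpposite.op '' ((fun s => s * rightProd b m) '' separatingSpace φ) := by
      have hfun : ((fun s => MulOpposite.op (rightProd b m) * s) ∘ MulOpposite.op)
          = (MulOpposite.op ∘ (fun s : B => s * rightProd b m)) := by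
        funext s
        exact (MulOpposite.op_mul s (rightProd b m)).symm
      rw [← Set.image_comp, hfun, Set.image_comp]
    rw [himg]
    exact (MulOpposite.opHomeomorph.image_closure _).symm
  refine ⟨max N1 N2, fun n hn => ⟨hN1 n (le_trans (le_max_left _ _) hn), ?_⟩⟩
  have h := hN2 n (le_trans (le_max_right _ _) hn)
  rw [hclos n, hclos (n+1)] at h
  exact Set.image_injective.mpr MulOpposite.op_injective h
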